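/- Let N₁₂ be the 5-dimensional commutative ℂ-algebra with basis e₁, …, e₅ and nonzero products e₁e₁ = e₂, e₁e₂ = e₂e₁ = e₃, e₁e₃ = e₃e₁ = e₄, e₂e₂ = e₅, e₃e₃ = e₅, and let N₁₅ be the 5-dimensional commutative ℂ-algebra with basis e₁, …, e₅ and nonzero products e₁e₁ = e₂, e₁e₂ = e₂e₁ = e₃, e₂e₃ = e₃e₂ = e₄, e₃e₃ = e₅ (in each case all other products of basis vectors are zero). Then N₁₂ and N₁₅ are not isomorphic as ℂ-algebras. -/

import Mathlib

/-!
An isomorphism `N₁₂ → N₁₅` would carry the preimages `u, v` of `e₂, e₃` into `N₁₂²`, which is the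
hyperplane of vectors with vanishing first coordinate. In `N₁₂` any two such vectors multiply to a
multiple of `e₅`, so `e₄ = e₂e₃` and `e₅ = e₃e₃` in `N₁₅` would both be multiples of the image of `e₅`.
-/

/-- The multiplication of the 5-dimensional commutative algebra `N₁₂` with
`e₁e₁ = e₂`, `e₁e₂ = e₂e₁ = e₃`, `e₁e₃ = e₃e₁ = e₄`, `e₂e₂ = e₅`, `e₃e₃ = e₅`,
on the carrier `Fin 5 → ℂ`. -/
def mulN12 (u v : Fin 5 → ℂ) : Fin 5 → ℂ :=
  ![0, u 0 * v 0, u 0 * v 1 + u 1 * v 0, u 0 * v 2 + u 2 * v 0, u 1 * v 1 + u 2 * v 2]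

/-- The multiplication of the 5-dimensional commutative algebra `N₁₅` with
`e₁e₁ = e₂`, `e₁e₂ = e₂e₁ = e₃`, `e₂e₃ = e₃e₂ = e₄`, `e₃e₃ = e₅`,
on the carrier `Fin 5 → ℂ`. -/
def mulN15 (u v : Fin 5 → ℂ) : Fin 5 → ℂ :=
  ![0, u 0 * v 0, u 0 * v 1 + u 1 * v 0, u 1 * v 2 + u 2 * v 1, u 2 * v 2]

theorem Pi.not_smul_eq_single_one_and_smul_eq_single_one {ι R : Type*} [DecidableEq ι]
    [CommRing R] [Nontrivial R] {i j : ι} (hij : i ≠ j) (a b : R) (w : ι → R) :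
    ¬ (a • w = Pi.single i 1 ∧ b • w = Pi.single j 1) := by
  rintro ⟨ha, hb⟩
  have hai : a * w i = 1 := by simpa using congrFun ha i
  have hbi : b * w i = 0 := by simpa [hij] using congrFun hb i
  have hbj : b * w j = 1 := by simpa using congrFun hb j
  have hb0 : b = 0 := by linear_combination a * hbi - b * hai
  simp [hb0] at hbj

theorem mulN12_apply_zero (u v : Fin 5 → ℂ) : mulN12 u v 0 = 0 := rfl

theorem mulN12_eq_smul_single_of_apply_zero {x y : Fin 5 → ℂ} (hx : x 0 = 0) (hy : y 0 = 0) :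
    mulN12 x y = (x 1 * y 1 + x 2 * y 2) • Pi.single 4 1 := by
  funext i
  fin_cases i <;> simp [mulN12, hx, hy]

theorem mulN15_single_zero_single_zero :
    mulN15 (Pi.single 0 1) (Pi.single 0 1) = Pi.single 1 1 := by
  funext i
  fin_cases i <;> simp [mulN15]

theorem mulN15_single_zero_single_one :
    mulN15 (Pi.single 0 1) (Pi.single 1 1) = Pi.single 2 1 := by
  funext i
  fin_cases i <;> simp [mulN15]

theorem mulN15_single_one_single_two :
    mulN15 (Pi.single 1 1) (Pi.single 2 1) = Pi.single 3 1 := by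
  funext i
  fin_cases i <;> simp [mulN15]

theorem mulN15_single_two_single_two :
    mulN15 (Pi.single 2 1) (Pi.single 2 1) = Pi.single 4 1 := by
  funext i
  fin_cases i <;> simp [mulN15]

/-- The algebras `N₁₂` and `N₁₅` are not isomorphic as `ℂ`-algebras. -/
theorem stmt17 :
    ¬ ∃ e : (Fin 5 → ℂ) ≃ₗ[ℂ] (Fin 5 → ℂ),
      ∀ u v : Fin 5 → ℂ, e (mulN12 u v) = mulN15 (e u) (e v) := by
  rintro ⟨e, he⟩
  have he_symm (a b : Fin 5 → ℂ) : e.symm (mulN15 a b) = mulN12 (e.symm a) (e.symm b) := by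
    rw [e.symm_apply_eq, he, e.apply_symm_apply, e.apply_symm_apply]
  have hu : e.symm (Pi.single 1 1) 0 = 0 := by
    rw [← mulN15_single_zero_single_zero, he_symm, mulN12_apply_zero]
  have hv : e.symm (Pi.single 2 1) 0 = 0 := by
    rw [← mulN15_single_zero_single_one, he_symm, mulN12_apply_zero]
  set u := e.symm (Pi.single 1 1)
  set v := e.symm (Pi.single 2 1)
  apply Pi.not_smul_eq_single_one_and_smul_eq_single_one (show (3 : Fin 5) ≠ 4 by decide)
    (u 1 * v 1 + u 2 * v 2) (v 1 * v 1 + v 2 * v 2) (e (Pi.single 4 1))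
  constructor
  · rw [← map_smul, ← mulN12_eq_smul_single_of_apply_zero hu hv, he, e.apply_symm_apply,
      e.apply_symm_apply, mulN15_single_one_single_two]
  · rw [← map_smul, ← mulN12_eq_smul_single_of_apply_zero hv hv, he, e.apply_symm_apply,
      mulN15_single_two_single_two]
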